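/- Every hyperoval of PHG(2, ℤ/4ℤ) contains exactly one point from each of the 7 neighbour classes; equivalently, coordinatewise reduction mod 2 maps the 7 points of a hyperoval bijectively onto the 7 points of the quotient plane PG(2,𝔽₂). -/

import Mathlib

/-- A point of a projective Hjelmslev geometry PHG(n-1, R): a free rank-1 submodule
of Rⁿ, i.e. the R-span of a vector having at least one unit coordinate. -/
def IsPoint {R : Type} [CommRing R] {n : ℕ} (P : Submodule R (Fin n → R)) : Prop :=
  ∃ v : Fin n → R, (∃ i, IsUnit (v i)) ∧ P = Submodule.span R {v}

/-- A free rank-k submodule of Rⁿ: a submodule linearly isomorphic to Rᵏ. -/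
def IsFreeRank {R : Type} [CommRing R] {n : ℕ} (k : ℕ) (L : Submodule R (Fin n → R)) : Prop :=
  Nonempty ((Fin k → R) ≃ₗ[R] L)

/-- A line of PHG(2, R): a free rank-2 submodule of R³. -/
abbrev IsLine {R : Type} [CommRing R] (L : Submodule R (Fin 3 → R)) : Prop := IsFreeRank 2 L

/-- A hyperoval of PHG(2, R), |R| = 4: a set of 7 points with at most 2 points on each line. -/
def IsHyperoval {R : Type} [CommRing R] (H : Set (Submodule R (Fin 3 → R))) : Prop :=
  (∀ P ∈ H, IsPoint P) ∧ H.ncard = 7 ∧ ∀ L, IsLine L → {P ∈ H | P ≤ L}.ncard ≤ 2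

abbrev R4 := ZMod 4

/-- Reduction mod 2 on ℤ/4ℤ. -/
def red2 : ZMod 4 →+* ZMod 2 := ZMod.castHom (show (2:ℕ) ∣ 4 by norm_num) (ZMod 2)

instance : RingHomSurjective red2 :=
  ⟨fun y => by
    fin_cases y
    · exact ⟨0, map_zero _⟩
    · exact ⟨1, map_one _⟩⟩

/-- Coordinatewise reduction mod 2, as a semilinear map (Fin 3 → ℤ/4ℤ) → (Fin 3 → 𝔽₂). -/
def redMap : (Fin 3 → ZMod 4) →ₛₗ[red2] (Fin 3 → ZMod 2) where
  toFun v := fun i => red2 (v i)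
  map_add' := by intros; funext i; simp
  map_smul' := by intros; funext i; simp [Pi.smul_apply, smul_eq_mul]

/-- The neighbour class of a point, viewed as a point of the quotient plane PG(2,𝔽₂):
the 𝔽₂-line of 𝔽₂³ spanned by the coordinatewise reduction mod 2. -/
def redPt (P : Submodule R4 (Fin 3 → R4)) : Submodule (ZMod 2) (Fin 3 → ZMod 2) :=
  Submodule.map redMap P

/-- Three points of PG(2,𝔽₂) (given as subspaces of 𝔽₂³) are collinear iff together
they span a subspace of dimension at most 2. -/
def CollinearF2 (A B C : Submodule (ZMod 2) (Fin 3 → ZMod 2)) : Prop :=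
  Module.finrank (ZMod 2) ↥(A ⊔ B ⊔ C) ≤ 2

/-- A point of the quotient plane PG(2,𝔽₂): an 𝔽₂-line of 𝔽₂³. -/
def IsF2Point (N : Submodule (ZMod 2) (Fin 3 → ZMod 2)) : Prop :=
  ∃ w : Fin 3 → ZMod 2, w ≠ 0 ∧ N = Submodule.span (ZMod 2) {w}

/-!
At most six lines of PHG(2, ℤ/4ℤ) pass through a point `⟨v⟩`: each is `⟨v, w⟩` with `w` one of six
normalised vectors vanishing at a unit coordinate of `v`. If a hyperoval `H` contained distinct
neighbours `P = ⟨v⟩` and `Q = ⟨v + 2z⟩`, then `Q` would lie on the two distinct lines `⟨v, z⟩` and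
`⟨v, z + 2u⟩` through `P`. Every other point of `H` lies on a line through `P` that carries no
further point of `H`, so there would be at least seven lines through `P`. Hence reduction mod 2 is
injective on `H`, and onto because both sides have seven points.
-/

open Submodule Set

local notation "V₄" => Fin 3 → R4
local notation "V₂" => Fin 3 → ZMod 2

section FreeRank

variable {R : Type} [CommRing R] {n k : ℕ}

lemma isFreeRank_span_range {v : Fin k → Fin n → R} (hv : LinearIndependent R v) :
    IsFreeRank k (span R (range v)) :=
  ⟨(Module.Basis.span hv).equivFun.symm⟩

lemma IsFreeRank.exists_eq_span_range {L : Submodule R (Fin n → R)} (hL : IsFreeRank k L) :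
    ∃ v : Fin k → Fin n → R, L = span R (range v) := by
  obtain ⟨g⟩ := hL
  let b := (Pi.basisFun R (Fin k)).map g
  refine ⟨L.subtype ∘ b, ?_⟩
  rw [range_comp, ← map_span, b.span_eq, map_subtype_top]

lemma IsFreeRank.linearIndependent [Nontrivial R] {L : Submodule R (Fin n → R)}
    (hL : IsFreeRank k L) {v : Fin k → Fin n → R} (hv : L = span R (range v)) :
    LinearIndependent R v := by
  obtain ⟨g⟩ := hL
  rw [linearIndependent_iff_card_eq_finrank_span, Set.finrank, Fintype.card_fin, ← hv,
    ← g.finrank_eq, Module.finrank_fin_fun]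

lemma isLine_span_pair {a b : Fin 3 → R} (hab : LinearIndependent R ![a, b]) :
    IsLine (span R {a, b}) := by
  have h := isFreeRank_span_range hab
  rwa [Matrix.range_cons_cons_empty] at h

lemma IsLine.exists_eq_span_pair {L : Submodule R (Fin 3 → R)} (hL : IsLine L) :
    ∃ a b, L = span R {a, b} := by
  obtain ⟨v, rfl⟩ := IsFreeRank.exists_eq_span_range hL
  refine ⟨v 0, v 1, ?_⟩
  rw [← Matrix.range_cons_cons_empty, ← FinVec.etaExpand_eq v]
  rfl

lemma IsLine.linearIndependent_pair [Nontrivial R] {L : Submodule R (Fin 3 → R)}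
    (hL : IsLine L) {a b : Fin 3 → R} (hab : L = span R {a, b}) :
    LinearIndependent R ![a, b] :=
  IsFreeRank.linearIndependent hL (by rw [hab, Matrix.range_cons_cons_empty])

end FreeRank

lemma span_pair_smul_add_smul_eq {R M : Type*} [CommRing R] [AddCommGroup M] [Module R M]
    (a b : M) (α : R) {β : R} (hβ : IsUnit β) :
    span R {a, α • a + β • b} = span R {a, b} := by
  obtain ⟨u, rfl⟩ := hβ
  refine le_antisymm (span_le.mpr ?_) (span_le.mpr ?_) <;>
    rintro x (rfl | rfl) <;> refine mem_span_pair.mpr ?_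
  · exact ⟨1, 0, by simp⟩
  · exact ⟨α, u, rfl⟩
  · exact ⟨1, 0, by simp⟩
  · exact ⟨-(↑u⁻¹ * α), ↑u⁻¹, by simp [smul_add, smul_smul]⟩

section ZModTwo

variable {M : Type*} [AddCommGroup M] [Module (ZMod 2) M]

lemma span_singleton_eq_span_singleton_iff_of_zmod_two {x y : M} :
    span (ZMod 2) {x} = span (ZMod 2) {y} ↔ x = y := by
  rw [span_singleton_eq_span_singleton]
  constructor
  · rintro ⟨u, rfl⟩
    rw [Subsingleton.elim u 1, one_smul]
  · rintro rfl
    exact ⟨1, one_smul _ _⟩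

lemma linearIndependent_pair_of_ne {x y : M} (hx : x ≠ 0) (hy : y ≠ 0) (hxy : x ≠ y) :
    LinearIndependent (ZMod 2) ![x, y] := by
  rw [LinearIndependent.pair_iff' hx]
  intro a
  obtain rfl | rfl : a = 0 ∨ a = 1 := by revert a; decide
  · rw [zero_smul]
    exact hy.symm
  · rw [one_smul]
    exact hxy

end ZModTwo

lemma exists_notMem_span_pair (x y : V₂) : ∃ w, w ∉ span (ZMod 2) {x, y} := by
  by_contra! h
  have htop : span (ZMod 2) (range ![x, y]) = ⊤ := by
    rw [Matrix.range_cons_cons_empty, eq_top_iff]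
    exact fun w _ => h w
  have hrank := finrank_range_le_card (R := ZMod 2) ![x, y]
  rw [Set.finrank, htop, finrank_top, Module.finrank_fin_fun] at hrank
  simp at hrank

lemma isUnit_iff_red2_ne_zero : ∀ x : ZMod 4, IsUnit x ↔ red2 x ≠ 0 := by decide

lemma two_mul_eq_zero_iff_red2_eq_zero : ∀ x : ZMod 4, 2 * x = 0 ↔ red2 x = 0 := by decide

lemma exists_eq_two_mul_of_red2_eq_zero : ∀ x : ZMod 4, red2 x = 0 → ∃ y, x = 2 * y := by
  decide

lemma red2_natCast_val (c : ZMod 2) : red2 (c.val : ZMod 4) = c := by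
  rw [map_natCast, ZMod.natCast_zmod_val]

@[simp] lemma redMap_apply (w : V₄) (j : Fin 3) : redMap w j = red2 (w j) := rfl

lemma redMap_surjective : Function.Surjective redMap :=
  fun w => ⟨fun j => ((w j).val : ZMod 4), funext fun j => red2_natCast_val (w j)⟩

lemma redMap_eq_zero_iff {w : V₄} : redMap w = 0 ↔ (2 : R4) • w = 0 := by
  simp only [funext_iff, redMap_apply, Pi.smul_apply, smul_eq_mul, Pi.zero_apply,
    two_mul_eq_zero_iff_red2_eq_zero]

lemma exists_eq_two_smul_of_redMap_eq_zero {w : V₄} (hw : redMap w = 0) :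
    ∃ z : V₄, w = (2 : R4) • z := by
  choose z hz using fun j => exists_eq_two_mul_of_red2_eq_zero (w j) (congrFun hw j)
  exact ⟨z, funext hz⟩

lemma redMap_ne_zero_iff {w : V₄} : redMap w ≠ 0 ↔ ∃ j, IsUnit (w j) := by
  simp [funext_iff, isUnit_iff_red2_ne_zero]

lemma redPt_span_singleton (v : V₄) : redPt (span R4 {v}) = span (ZMod 2) {redMap v} := by
  rw [redPt, map_span, image_singleton]

lemma LinearIndependent.of_comp_redMap {ι : Type*} {v : ι → V₄}
    (hv : LinearIndependent (ZMod 2) (redMap ∘ v)) : LinearIndependent R4 v := by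
  have red2_eq_zero : ∀ (s : Finset ι) (g : ι → R4), redMap (∑ i ∈ s, g i • v i) = 0 →
      ∀ i ∈ s, red2 (g i) = 0 := by
    intro s g hg
    refine linearIndependent_iff'.mp hv s (fun i => red2 (g i)) ?_
    simpa only [map_sum, map_smulₛₗ, Function.comp_apply] using hg
  rw [linearIndependent_iff']
  intro s g hg i hi
  choose! h hgh using fun i hi =>
    exists_eq_two_mul_of_red2_eq_zero (g i) (red2_eq_zero s g (by rw [hg, map_zero]) i hi)
  have hsum : (2 : R4) • ∑ i ∈ s, h i • v i = 0 := by
    rw [Finset.smul_sum, ← hg]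
    refine Finset.sum_congr rfl fun i hi => ?_
    rw [hgh i hi, smul_smul]
  rw [hgh i hi, two_mul_eq_zero_iff_red2_eq_zero]
  exact red2_eq_zero s h (redMap_eq_zero_iff.mpr hsum) i hi

lemma linearIndependent_pair_of_redMap {a b : V₄}
    (hab : LinearIndependent (ZMod 2) ![redMap a, redMap b]) : LinearIndependent R4 ![a, b] :=
  LinearIndependent.of_comp_redMap <| by
    rwa [show ⇑redMap ∘ ![a, b] = ![redMap a, redMap b] by ext i : 1; fin_cases i <;> rfl]

lemma redMap_mem_span_pair_of_two_smul_mem {a b u : V₄}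
    (hab : LinearIndependent (ZMod 2) ![redMap a, redMap b])
    (hu : (2 : R4) • u ∈ span R4 {a, b}) :
    redMap u ∈ span (ZMod 2) {redMap a, redMap b} := by
  obtain ⟨c, d, hcd⟩ := mem_span_pair.mp hu
  have hred : red2 c • redMap a + red2 d • redMap b = 0 := by
    rw [← map_smulₛₗ, ← map_smulₛₗ, ← map_add, hcd, map_smulₛₗ, (by decide : red2 2 = 0),
      zero_smul]
  obtain ⟨hc, hd⟩ := LinearIndependent.pair_iff.mp hab _ _ hred
  obtain ⟨c', rfl⟩ := exists_eq_two_mul_of_red2_eq_zero c hc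
  obtain ⟨d', rfl⟩ := exists_eq_two_mul_of_red2_eq_zero d hd
  have h2 : (2 : R4) • (u - c' • a - d' • b) = 0 := by
    rw [smul_sub, smul_sub, ← hcd]
    module
  refine mem_span_pair.mpr ⟨red2 c', red2 d', (sub_eq_zero.mp ?_).symm⟩
  rw [← map_smulₛₗ, ← map_smulₛₗ, ← map_add, ← map_sub, redMap_eq_zero_iff]
  convert h2 using 1
  module

lemma exists_eq_add_two_smul_of_redMap_eq {v s : V₄} (hv : redMap v ≠ 0)
    (hs : redMap s = redMap v) (hne : span R4 {s} ≠ span R4 {v}) :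
    ∃ z : V₄, s = v + (2 : R4) • z ∧ LinearIndependent (ZMod 2) ![redMap v, redMap z] := by
  obtain ⟨z, hz⟩ := exists_eq_two_smul_of_redMap_eq_zero (w := s - v)
    (by rw [map_sub, hs, sub_self])
  have hsz : s = v + (2 : R4) • z := eq_add_of_sub_eq' hz
  refine ⟨z, hsz, (LinearIndependent.pair_iff' hv).mpr fun c hc => hne ?_⟩
  set c' : R4 := (c.val : ZMod 4)
  have h2 : (2 : R4) • (z - c' • v) = 0 := by
    rw [← redMap_eq_zero_iff, map_sub, map_smulₛₗ, red2_natCast_val, hc, sub_self]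
  have hsv : s = (1 + 2 * c') • v := by
    rw [hsz, ← sub_eq_zero, ← h2]
    module
  rw [hsv, span_singleton_smul_eq]
  exact (by decide : ∀ c : ZMod 4, IsUnit (1 + 2 * c)) c'

def linesThrough {R : Type} [CommRing R] (P : Submodule R (Fin 3 → R)) :
    Set (Submodule R (Fin 3 → R)) :=
  {L | IsLine L ∧ P ≤ L}

lemma exists_two_linesThrough_of_neighbour {v z : V₄}
    (hvz : LinearIndependent (ZMod 2) ![redMap v, redMap z]) :
    ∃ L₁ ∈ linesThrough (span R4 {v}), ∃ L₂ ∈ linesThrough (span R4 {v}),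
      L₁ ≠ L₂ ∧ span R4 {v + (2 : R4) • z} ≤ L₁ ∧ span R4 {v + (2 : R4) • z} ≤ L₂ := by
  obtain ⟨w, hw⟩ := exists_notMem_span_pair (redMap v) (redMap z)
  obtain ⟨u, rfl⟩ := redMap_surjective w
  have hred : redMap (z + (2 : R4) • u) = redMap z := by
    rw [map_add, map_smulₛₗ, (by decide : red2 2 = 0), zero_smul, add_zero]
  have hv : ∀ y : V₄, span R4 {v} ≤ span R4 {v, y} := fun y => span_mono (by simp)
  refine ⟨span R4 {v, z}, ⟨isLine_span_pair (linearIndependent_pair_of_redMap hvz), hv z⟩,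
    span R4 {v, z + (2 : R4) • u},
    ⟨isLine_span_pair (linearIndependent_pair_of_redMap (by rwa [hred])), hv _⟩, fun h => hw ?_,
    (span_singleton_le_iff_mem _ _).mpr (mem_span_pair.mpr ⟨1, 2, by rw [one_smul]⟩),
    (span_singleton_le_iff_mem _ _).mpr (mem_span_pair.mpr ⟨1, 2, ?_⟩)⟩
  · refine redMap_mem_span_pair_of_two_smul_mem hvz ?_
    have hz : z ∈ span R4 {v, z} := subset_span (mem_insert_of_mem _ rfl)
    have hz2 : z + (2 : R4) • u ∈ span R4 {v, z} := h ▸ subset_span (mem_insert_of_mem _ rfl)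
    simpa using sub_mem hz2 hz
  · rw [one_smul, smul_add, smul_smul, (by decide : (2 * 2 : R4) = 0), zero_smul, add_zero]

lemma exists_mem_linesThrough_of_ne {P Q : Submodule R4 V₄} (hP : IsPoint P) (hQ : IsPoint Q)
    (hPQ : P ≠ Q) : ∃ L ∈ linesThrough P, Q ≤ L := by
  obtain ⟨v, hv, rfl⟩ := hP
  obtain ⟨s, hs, rfl⟩ := hQ
  rw [← redMap_ne_zero_iff] at hv hs
  by_cases hsv : redMap s = redMap v
  · obtain ⟨z, rfl, hvz⟩ := exists_eq_add_two_smul_of_redMap_eq hv hsv hPQ.symm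
    obtain ⟨L, hL, -, -, -, hzL, -⟩ := exists_two_linesThrough_of_neighbour hvz
    exact ⟨L, hL, hzL⟩
  · have hvs := linearIndependent_pair_of_ne hv hs (Ne.symm hsv)
    exact ⟨span R4 {v, s}, ⟨isLine_span_pair (linearIndependent_pair_of_redMap hvs),
      span_mono (by simp)⟩, span_mono (by simp)⟩

def IsNormalized {R : Type*} [CommRing R] {n : ℕ} (w : Fin n → R) : Prop :=
  ∃ j, w j = 1 ∧ ∀ m < j, ¬IsUnit (w m)

lemma exists_unit_smul_isNormalized {R : Type*} [CommRing R] {n : ℕ} {w : Fin n → R}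
    (hw : ∃ j, IsUnit (w j)) : ∃ u : Rˣ, IsNormalized (u • w) := by
  obtain ⟨j, hj, hmin⟩ := wellFounded_lt.has_min {j | IsUnit (w j)} hw
  refine ⟨hj.unit⁻¹, j, hj.val_inv_mul, fun m hm => ?_⟩
  rw [Pi.smul_apply, Units.smul_def, smul_eq_mul, Units.isUnit_units_mul]
  exact fun h => hmin m h hm

lemma ncard_isNormalized (i : Fin 3) : {w : V₄ | w i = 0 ∧ IsNormalized w}.ncard = 6 := by
  have hfin : {w : V₄ | w i = 0 ∧ IsNormalized w} =
      ↑(Finset.univ.filter fun w : V₄ => w i = 0 ∧ ∃ j, w j = 1 ∧ ∀ m < j, ¬IsUnit (w m)) := by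
    ext
    simp [IsNormalized]
  rw [hfin, ncard_coe_finset]
  clear hfin
  revert i
  decide

lemma IsLine.exists_eq_span_pair_of_mem {L : Submodule R4 V₄} (hL : IsLine L) {v : V₄}
    (hv : redMap v ≠ 0) (hvL : v ∈ L) : ∃ c, L = span R4 {v, c} := by
  obtain ⟨a, b, rfl⟩ := hL.exists_eq_span_pair
  obtain ⟨α, β, rfl⟩ := mem_span_pair.mp hvL
  simp only [map_add, map_smulₛₗ] at hv
  by_cases hβ : red2 β = 0
  · have hα : IsUnit α := (isUnit_iff_red2_ne_zero α).mpr fun hα => hv (by simp [hα, hβ])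
    refine ⟨b, ?_⟩
    rw [pair_comm, ← span_pair_smul_add_smul_eq b a β hα, add_comm, pair_comm]
  · refine ⟨a, ?_⟩
    rw [← span_pair_smul_add_smul_eq a b α ((isUnit_iff_red2_ne_zero β).mpr hβ), pair_comm]

lemma linesThrough_subset_image {v : V₄} {i : Fin 3} (hv : IsUnit (v i)) :
    linesThrough (span R4 {v}) ⊆
      (fun w => span R4 {v, w}) '' {w | w i = 0 ∧ IsNormalized w} := by
  rintro L ⟨hL, hvL⟩
  obtain ⟨c, rfl⟩ := hL.exists_eq_span_pair_of_mem (redMap_ne_zero_iff.mpr ⟨i, hv⟩)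
    ((span_singleton_le_iff_mem _ _).mp hvL)
  set c' := (-(c i * ↑hv.unit⁻¹)) • v + (1 : R4) • c
  have hc' : span R4 {v, c'} = span R4 {v, c} := span_pair_smul_add_smul_eq v c _ isUnit_one
  have hc'i : c' i = 0 := by
    simp [c', mul_assoc, hv.val_inv_mul]
  have : Fact (1 < 4) := ⟨by norm_num⟩
  have hc'ne : redMap c' ≠ 0 := fun h => by
    have := LinearIndependent.pair_iff.mp (hL.linearIndependent_pair hc'.symm) 0 2
      (by rw [zero_smul, zero_add, ← redMap_eq_zero_iff, h])
    exact absurd this.2 (by decide)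
  obtain ⟨u, hu⟩ := exists_unit_smul_isNormalized (redMap_ne_zero_iff.mp hc'ne)
  refine ⟨u • c', ⟨by simp [hc'i], hu⟩, ?_⟩
  rw [← hc', Units.smul_def, ← span_pair_smul_add_smul_eq v _ 0 u.isUnit, zero_smul, zero_add]

lemma IsPoint.ncard_linesThrough_le {P : Submodule R4 V₄} (hP : IsPoint P) :
    (linesThrough P).ncard ≤ 6 := by
  obtain ⟨v, ⟨i, hv⟩, rfl⟩ := hP
  calc (linesThrough (span R4 {v})).ncard
      ≤ ((fun w => span R4 {v, w}) '' {w | w i = 0 ∧ IsNormalized w}).ncard :=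
        ncard_le_ncard (linesThrough_subset_image hv)
    _ ≤ {w : V₄ | w i = 0 ∧ IsNormalized w}.ncard := ncard_image_le (toFinite _)
    _ = 6 := ncard_isNormalized i

lemma ncard_le_ncard_of_pencil {α β : Type*} (I : α → β → Prop) {H : Set α} {Λ : Set β}
    {P Q : α} (hΛ : Λ.Finite) (hQ : Q ∈ H) (hQP : Q ≠ P)
    (hcover : ∀ T ∈ H, T ≠ P → ∃ L ∈ Λ, I T L)
    (hsecant : ∀ L ∈ Λ, ∀ T ∈ H, ∀ T' ∈ H, T ≠ P → T' ≠ P → I T L → I T' L → T = T')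
    (hQ₂ : ∃ L₁ ∈ Λ, ∃ L₂ ∈ Λ, L₁ ≠ L₂ ∧ I Q L₁ ∧ I Q L₂) :
    H.ncard ≤ Λ.ncard := by
  classical
  obtain ⟨L₁, h₁, L₂, h₂, h₁₂, hQ₁, hQ₂⟩ := hQ₂
  have : Nonempty β := ⟨L₁⟩
  choose! f hfΛ hf using hcover
  obtain ⟨L₀, hL₀, hQL₀, hL₀f⟩ : ∃ L₀ ∈ Λ, I Q L₀ ∧ L₀ ≠ f Q := by
    by_cases h : L₁ = f Q
    · exact ⟨L₂, h₂, hQ₂, fun h' => h₁₂ (h.trans h'.symm)⟩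
    · exact ⟨L₁, h₁, hQ₁, h⟩
  -- `P` goes to a line through `Q` other than `f Q`; by `hsecant` no `f T` equals it
  let g T := if T = P then L₀ else f T
  have hg_ne : ∀ T ∈ H, T ≠ P → f T ≠ L₀ := fun T hT hTP hfT => by
    by_cases hTQ : T = Q
    · exact hL₀f (hTQ ▸ hfT.symm)
    · exact hTQ (hsecant L₀ hL₀ T hT Q hQ hTP hQP (hfT ▸ hf T hT hTP) hQL₀)
  refine ncard_le_ncard_of_injOn g (fun T hT => ?_) (fun T hT T' hT' hTT' => ?_) hΛ
  · by_cases hTP : T = P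
    · simpa [g, hTP] using hL₀
    · simpa [g, hTP] using hfΛ T hT hTP
  · by_cases hTP : T = P <;> by_cases hT'P : T' = P <;>
      simp only [g, hTP, hT'P, if_true, if_false] at hTT'
    · rw [hTP, hT'P]
    · exact absurd hTT'.symm (hg_ne T' hT' hT'P)
    · exact absurd hTT' (hg_ne T hT hTP)
    · exact hsecant _ (hfΛ T hT hTP) T hT T' hT' hTP hT'P (hf T hT hTP) (hTT' ▸ hf T' hT' hT'P)

lemma IsHyperoval.eq_of_le {H : Set (Submodule R4 V₄)} (hH : IsHyperoval H)
    {L P T T' : Submodule R4 V₄} (hL : IsLine L) (hP : P ∈ H) (hT : T ∈ H) (hT' : T' ∈ H)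
    (hTP : T ≠ P) (hT'P : T' ≠ P) (hPL : P ≤ L) (hTL : T ≤ L) (hT'L : T' ≤ L) : T = T' := by
  by_contra hTT'
  have h3 : ({P, T, T'} : Set _).ncard = 3 :=
    ncard_eq_three.mpr ⟨P, T, T', hTP.symm, hT'P.symm, hTT', rfl⟩
  have hle := ncard_le_ncard (show {P, T, T'} ⊆ {X ∈ H | X ≤ L} by
    rintro X (rfl | rfl | rfl) <;> simp_all)
  have h2 := hH.2.2 L hL
  omega

lemma IsHyperoval.injOn_redPt {H : Set (Submodule R4 V₄)} (hH : IsHyperoval H) :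
    InjOn redPt H := by
  intro P hP Q hQ hPQ
  by_contra hne
  obtain ⟨v, hv, rfl⟩ := hH.1 P hP
  obtain ⟨s, hs, rfl⟩ := hH.1 Q hQ
  rw [← redMap_ne_zero_iff] at hv hs
  have hsv : redMap s = redMap v := by
    rwa [redPt_span_singleton, redPt_span_singleton,
      span_singleton_eq_span_singleton_iff_of_zmod_two, eq_comm] at hPQ
  obtain ⟨z, rfl, hvz⟩ := exists_eq_add_two_smul_of_redMap_eq hv hsv (Ne.symm hne)
  have h7 : H.ncard ≤ (linesThrough (span R4 {v})).ncard :=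
    ncard_le_ncard_of_pencil (· ≤ ·) (toFinite _) hQ (Ne.symm hne)
      (fun T hT hTP => exists_mem_linesThrough_of_ne (hH.1 _ hP) (hH.1 T hT) (Ne.symm hTP))
      (fun L hL T hT T' hT' hTP hT'P => hH.eq_of_le hL.1 hP hT hT' hTP hT'P hL.2)
      (exists_two_linesThrough_of_neighbour hvz)
  have h6 := (hH.1 _ hP).ncard_linesThrough_le
  rw [hH.2.1] at h7
  omega

lemma ncard_setOf_isF2Point : {N | IsF2Point N}.ncard = 7 := by
  have himage : {N | IsF2Point N} = (fun w : V₂ => span (ZMod 2) {w}) '' {0}ᶜ := by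
    ext N
    simp [IsF2Point, eq_comm]
  rw [himage, InjOn.ncard_image fun x _ y _ h =>
    span_singleton_eq_span_singleton_iff_of_zmod_two.mp h, ncard_compl, ncard_singleton]
  simp

lemma IsPoint.isF2Point_redPt {P : Submodule R4 V₄} (hP : IsPoint P) :
    IsF2Point (redPt P) := by
  obtain ⟨v, hv, rfl⟩ := hP
  exact ⟨redMap v, redMap_ne_zero_iff.mpr hv, redPt_span_singleton v⟩

theorem hyperoval_bijects_to_quotient_plane :
    ∀ H : Set (Submodule R4 (Fin 3 → R4)), IsHyperoval H →
      Set.BijOn redPt H {N | IsF2Point N} := by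
  intro H hH
  have hmaps : MapsTo redPt H {N | IsF2Point N} := fun P hP => (hH.1 P hP).isF2Point_redPt
  refine ⟨hmaps, hH.injOn_redPt, ?_⟩
  refine (eq_of_subset_of_ncard_le hmaps.image_subset ?_ (toFinite _)).superset
  rw [hH.injOn_redPt.ncard_image, hH.2.1, ncard_setOf_isF2Point]
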